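/- arXiv:1906.04905 — 3 statements merged into one kernel-verified Lean document; each statement's English description precedes it below -/
import Mathlib

section
/- Let H be a real inner product space, and let P and Q be orthogonal projections onto closed subspaces E and F respectively. If |⟨u,v⟩| ≤ ξ‖u‖‖v‖ for all u ∈ E and v ∈ F (with ξ ≥ 0), then the operator norm of the composition P∘Q satisfies ‖P∘Q‖ ≤ ξ. -/
open RealInnerProductSpace

/-- If `P` and `Q` are orthogonal projections (self-adjoint idempotents) on a real
inner product space whose ranges are `ξ`-orthogonal, then `‖P ∘ Q‖ ≤ ξ`. -/
theorem stmt0 {H : Type*} [NormedAddCommGroup H] [InnerProductSpace ℝ H]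
    (P Q : H →L[ℝ] H) (ξ : ℝ) (hξ : 0 ≤ ξ)
    (hPidem : P.comp P = P) (hQidem : Q.comp Q = Q)
    (hPsa : ∀ x y : H, ⟪P x, y⟫ = ⟪x, P y⟫)
    (hQsa : ∀ x y : H, ⟪Q x, y⟫ = ⟪x, Q y⟫)
    (horth : ∀ u ∈ Set.range P, ∀ v ∈ Set.range Q, |⟪u, v⟫| ≤ ξ * ‖u‖ * ‖v‖) :
    ‖P.comp Q‖ ≤ ξ := by
  have hPP : ∀ x, P (P x) = P x := fun x => congrFun (congrArg DFunLike.coe hPidem) x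
  have hQQ : ∀ x, Q (Q x) = Q x := fun x => congrFun (congrArg DFunLike.coe hQidem) x
  have hQnorm : ∀ x, ‖Q x‖ ≤ ‖x‖ := by
    intro x
    have h1 : ‖Q x‖ ^ 2 = ⟪x, Q x⟫ := by
      rw [← real_inner_self_eq_norm_sq, hQsa x (Q x), hQQ]
    have h2 : ⟪x, Q x⟫ ≤ ‖x‖ * ‖Q x‖ := real_inner_le_norm x (Q x)
    nlinarith [norm_nonneg (Q x), norm_nonneg x]
  refine ContinuousLinearMap.opNorm_le_bound _ hξ fun x => ?_
  have key : ‖P (Q x)‖ ^ 2 ≤ ξ * ‖P (Q x)‖ * ‖x‖ := by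
    have h1 : ‖P (Q x)‖ ^ 2 = ⟪P (Q x), Q x⟫ := by
      rw [← real_inner_self_eq_norm_sq, hPsa (Q x) (P (Q x)), hPP]
      exact real_inner_comm _ _
    have h2 : |⟪P (Q x), Q x⟫| ≤ ξ * ‖P (Q x)‖ * ‖Q x‖ :=
      horth _ ⟨Q x, rfl⟩ _ ⟨x, rfl⟩
    have h3 : ξ * ‖P (Q x)‖ * ‖Q x‖ ≤ ξ * ‖P (Q x)‖ * ‖x‖ := by
      have := hQnorm x
      have : 0 ≤ ξ * ‖P (Q x)‖ := mul_nonneg hξ (norm_nonneg _)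
      nlinarith [hQnorm x]
    calc ‖P (Q x)‖ ^ 2 = ⟪P (Q x), Q x⟫ := h1
      _ ≤ |⟪P (Q x), Q x⟫| := le_abs_self _
      _ ≤ ξ * ‖P (Q x)‖ * ‖Q x‖ := h2
      _ ≤ ξ * ‖P (Q x)‖ * ‖x‖ := h3
  rcases eq_or_lt_of_le (norm_nonneg (P (Q x))) with h | h
  · simp only [ContinuousLinearMap.comp_apply, ← h]
    positivity
  · have : ‖P (Q x)‖ ≤ ξ * ‖x‖ := by nlinarith
    simpa using this
end

section
/- Let H be a real inner product space with orthogonal projection Γ onto a closed subspace, and let π be a (not necessarily orthogonal) projection with the same range as Γ. Suppose that the range of Id − π (the complementary subspace) is ξ-orthogonal to the range of Γ, i.e., |⟨Γw, (Id−π)v⟩| ≤ ξ‖Γw‖‖(Id−π)v‖ for all v, w. Then ‖Γ − π‖ ≤ √ξ · ‖Id − π‖. -/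
open RealInnerProductSpace

/-- If `Γ` is an orthogonal projection and `π` is a continuous projection with the same
range, and the range of `Id − π` is `ξ`-orthogonal to the range of `Γ`, then
`‖Γ − π‖ ≤ √ξ ‖Id − π‖`. -/
theorem stmt1 {H : Type*} [NormedAddCommGroup H] [InnerProductSpace ℝ H]
    (Γ π : H →L[ℝ] H) (ξ : ℝ) (hξ : 0 ≤ ξ)
    (hΓidem : Γ.comp Γ = Γ) (hπidem : π.comp π = π)
    (hΓsa : ∀ x y : H, ⟪Γ x, y⟫ = ⟪x, Γ y⟫)
    (hrange : Set.range π = Set.range Γ)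
    (horth : ∀ v w : H, |⟪Γ w, v - π v⟫| ≤ ξ * ‖Γ w‖ * ‖v - π v‖) :
    ‖Γ - π‖ ≤ Real.sqrt ξ * ‖ContinuousLinearMap.id ℝ H - π‖ := by
  have hΓΓ : ∀ x, Γ (Γ x) = Γ x := fun x =>
    congrArg (fun f : H →L[ℝ] H => f x) hΓidem
  have hππ : ∀ x, π (π x) = π x := fun x =>
    congrArg (fun f : H →L[ℝ] H => f x) hπidem
  have hΓπ : ∀ x, Γ (π x) = π x := by
    intro x
    obtain ⟨y, hy⟩ : π x ∈ Set.range Γ := hrange ▸ Set.mem_range_self x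
    rw [← hy, hΓΓ]
  have key : ∀ v : H, ‖Γ v - π v‖ ≤ Real.sqrt ξ * ‖v - π v‖ := by
    intro v
    set u := v - π v with hu
    have hΓu : Γ v - π v = Γ u := by simp [hu, map_sub, hΓπ]
    have hπu : π u = 0 := by simp [hu, map_sub, hππ]
    have hsq : ⟪Γ u, u⟫ = ‖Γ u‖ ^ 2 := by
      calc ⟪Γ u, u⟫ = ⟪u, Γ u⟫ := real_inner_comm _ _
        _ = ⟪u, Γ (Γ u)⟫ := by rw [hΓΓ]
        _ = ⟪Γ u, Γ u⟫ := (hΓsa u (Γ u)).symm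
        _ = ‖Γ u‖ ^ 2 := real_inner_self_eq_norm_sq _
    have h1 : ‖Γ u‖ ≤ ‖u‖ := by
      have hcs := abs_real_inner_le_norm (Γ u) u
      rw [hsq, abs_of_nonneg (sq_nonneg _)] at hcs
      by_cases hz : ‖Γ u‖ = 0
      · rw [hz]; exact norm_nonneg u
      · have hpos : 0 < ‖Γ u‖ := (norm_nonneg _).lt_of_ne (Ne.symm hz)
        nlinarith [hpos, hcs]
    have h2 : ‖Γ u‖ ^ 2 ≤ ξ * ‖Γ u‖ * ‖u‖ := by
      have := horth u u
      rw [show u - π u = u by rw [hπu, sub_zero], hsq] at this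
      calc ‖Γ u‖ ^ 2 ≤ |‖Γ u‖ ^ 2| := le_abs_self _
        _ ≤ ξ * ‖Γ u‖ * ‖u‖ := this
    have h3 : ‖Γ u‖ ^ 2 ≤ ξ * ‖u‖ ^ 2 := by
      nlinarith [norm_nonneg (Γ u), norm_nonneg u, mul_nonneg hξ (norm_nonneg u)]
    have h4 : ‖Γ u‖ ≤ Real.sqrt ξ * ‖u‖ := by
      have := Real.sqrt_le_sqrt h3
      rwa [Real.sqrt_sq (norm_nonneg _), Real.sqrt_mul hξ,
        Real.sqrt_sq (norm_nonneg _)] at this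
    rw [hΓu]; exact h4
  apply ContinuousLinearMap.opNorm_le_bound
  · exact mul_nonneg (Real.sqrt_nonneg _) (norm_nonneg _)
  · intro v
    have h5 : ‖v - π v‖ ≤ ‖ContinuousLinearMap.id ℝ H - π‖ * ‖v‖ := by
      simpa using (ContinuousLinearMap.id ℝ H - π).le_opNorm v
    calc ‖(Γ - π) v‖ = ‖Γ v - π v‖ := by simp
      _ ≤ Real.sqrt ξ * ‖v - π v‖ := key v
      _ ≤ Real.sqrt ξ * (‖ContinuousLinearMap.id ℝ H - π‖ * ‖v‖) := by
          exact mul_le_mul_of_nonneg_left h5 (Real.sqrt_nonneg _)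
      _ = Real.sqrt ξ * ‖ContinuousLinearMap.id ℝ H - π‖ * ‖v‖ := by ring
end

section
/- Let A : V → W be an invertible bounded linear map between normed spaces, P : V → V and Q : W → W bounded projections, and γ > 0. Assume: ‖A⁻¹‖ ≤ C, ‖A‖ ≤ C, ‖QA − AP‖ ≤ Θ, and C⁻¹ > Θ(1+γ). Then for every u ∈ V with ‖(Id−P)u‖ ≤ γ‖Pu‖, one has ‖(Id−Q)Au‖ ≤ ((Cγ + Θ(1+γ))/(C⁻¹ − Θ(1+γ))) · ‖QAu‖. -/
/-- Cone distortion under a bounded invertible map close to commuting with the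
projections: abstract version of the translation cone-distortion lemma. -/
theorem stmt2 {V W : Type*} [NormedAddCommGroup V] [NormedSpace ℝ V]
    [NormedAddCommGroup W] [NormedSpace ℝ W]
    (A : V ≃L[ℝ] W) (P : V →L[ℝ] V) (Q : W →L[ℝ] W)
    (hPidem : P.comp P = P) (hQidem : Q.comp Q = Q)
    (C Θ γ : ℝ) (hC : 0 < C) (hΘ : 0 ≤ Θ) (hγ : 0 < γ)
    (hAnorm : ‖(A : V →L[ℝ] W)‖ ≤ C) (hAinv : ‖(A.symm : W →L[ℝ] V)‖ ≤ C)
    (hcomm : ‖Q.comp (A : V →L[ℝ] W) - (A : V →L[ℝ] W).comp P‖ ≤ Θ)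
    (hgap : C⁻¹ > Θ * (1 + γ)) :
    ∀ u : V, ‖u - P u‖ ≤ γ * ‖P u‖ →
      ‖A u - Q (A u)‖ ≤ ((C * γ + Θ * (1 + γ)) / (C⁻¹ - Θ * (1 + γ))) * ‖Q (A u)‖ := by
  intro u hu
  set x := P u with hx
  -- norm of u
  have hux : ‖u‖ ≤ (1 + γ) * ‖x‖ := by
    calc ‖u‖ = ‖x + (u - x)‖ := by congr 1; abel
    _ ≤ ‖x‖ + ‖u - x‖ := norm_add_le _ _
    _ ≤ ‖x‖ + γ * ‖x‖ := by linarith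
    _ = (1 + γ) * ‖x‖ := by ring
  -- error estimate
  have hE : ‖Q (A u) - A x‖ ≤ Θ * ((1 + γ) * ‖x‖) := by
    have h1 := (Q.comp (A : V →L[ℝ] W) - (A : V →L[ℝ] W).comp P).le_opNorm u
    simp only [ContinuousLinearMap.sub_apply, ContinuousLinearMap.comp_apply,
      ContinuousLinearMap.coe_coe] at h1
    calc ‖Q (A u) - A x‖ ≤ ‖Q.comp (A : V →L[ℝ] W) - (A : V →L[ℝ] W).comp P‖ * ‖u‖ := h1
    _ ≤ Θ * ((1 + γ) * ‖x‖) := by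
        apply mul_le_mul hcomm hux (norm_nonneg _) hΘ
  -- lower bound for ‖A x‖
  have hAx : C⁻¹ * ‖x‖ ≤ ‖A x‖ := by
    have h1 : ‖x‖ = ‖A.symm (A x)‖ := by simp
    have h2 : ‖A.symm (A x)‖ ≤ C * ‖A x‖ := by
      calc ‖A.symm (A x)‖ ≤ ‖(A.symm : W →L[ℝ] V)‖ * ‖A x‖ :=
        (A.symm : W →L[ℝ] V).le_opNorm _
      _ ≤ C * ‖A x‖ := mul_le_mul_of_nonneg_right hAinv (norm_nonneg _)
    rw [inv_mul_le_iff₀ hC, h1]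
    exact h2
  -- lower bound for ‖Q (A u)‖
  have hQl : (C⁻¹ - Θ * (1 + γ)) * ‖x‖ ≤ ‖Q (A u)‖ := by
    have h1 := norm_sub_norm_le (A x) (Q (A u))
    have h2 : ‖A x - Q (A u)‖ = ‖Q (A u) - A x‖ := norm_sub_rev _ _
    nlinarith [norm_nonneg x]
  -- upper bound for the numerator
  have hN : ‖A u - Q (A u)‖ ≤ (C * γ + Θ * (1 + γ)) * ‖x‖ := by
    have h1 : A u - Q (A u) = A (u - x) - (Q (A u) - A x) := by
      simp only [map_sub]; abel
    have h2 : ‖A (u - x)‖ ≤ C * (γ * ‖x‖) := by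
      calc ‖A (u - x)‖ ≤ ‖(A : V →L[ℝ] W)‖ * ‖u - x‖ := (A : V →L[ℝ] W).le_opNorm _
      _ ≤ C * (γ * ‖x‖) := by
          apply mul_le_mul hAnorm hu (norm_nonneg _) (le_of_lt hC)
    calc ‖A u - Q (A u)‖ = ‖A (u - x) - (Q (A u) - A x)‖ := by rw [h1]
    _ ≤ ‖A (u - x)‖ + ‖Q (A u) - A x‖ := norm_sub_le _ _
    _ ≤ C * (γ * ‖x‖) + Θ * ((1 + γ) * ‖x‖) := by linarith
    _ = (C * γ + Θ * (1 + γ)) * ‖x‖ := by ring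
  -- conclude
  have hD : 0 < C⁻¹ - Θ * (1 + γ) := by linarith
  have hNn : 0 ≤ C * γ + Θ * (1 + γ) := by positivity
  calc ‖A u - Q (A u)‖ ≤ (C * γ + Θ * (1 + γ)) * ‖x‖ := hN
  _ = ((C * γ + Θ * (1 + γ)) / (C⁻¹ - Θ * (1 + γ))) * ((C⁻¹ - Θ * (1 + γ)) * ‖x‖) := by
      rw [← mul_assoc, div_mul_cancel₀ _ hD.ne']
  _ ≤ ((C * γ + Θ * (1 + γ)) / (C⁻¹ - Θ * (1 + γ))) * ‖Q (A u)‖ := by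
      apply mul_le_mul_of_nonneg_left hQl (by positivity)
end
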